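/- Let S be a positive face structure and a, b ∈ S_n. If γ(a) = γ(b) then either a = b or a and b are <⁺-comparable. If γ(a) <⁺ γ(b) then either a <⁺ b or a <⁻ b. If a <⁻ b then γ(a) <⁺ γ(b). -/

import Mathlib

/-- A pre-hypergraph: dimension-indexed finite sets of faces together with
codomain functions `gam k : S_{k+1} → S_k` and domain assignments
`del k : S_{k+1} → Finset S_k`. -/
structure PreHG where
  faces : ℕ → Finset ℕ
  gam : ℕ → ℕ → ℕ
  del : ℕ → ℕ → Finset ℕ

namespace PreHG

/-- δ extended to sets of faces. -/
def delS (S : PreHG) (k : ℕ) (A : Finset ℕ) : Finset ℕ := A.biUnion (S.del k)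

/-- γ extended to sets of faces. -/
def gamS (S : PreHG) (k : ℕ) (A : Finset ℕ) : Finset ℕ := A.image (S.gam k)

/-- The set `ι(a) = δδ(a) ∩ γδ(a)` of internal faces of a face `a` of dimension `k+2`
(the result lives in dimension `k`). -/
def iota (S : PreHG) (k : ℕ) (a : ℕ) : Finset ℕ :=
  S.delS k (S.del (k+1) a) ∩ S.gamS k (S.del (k+1) a)

/-- One step of the upper order: `a ⊲⁺ b` on faces of dimension `k`:
there is `α` of dimension `k+1` with `a ∈ δ(α)` and `γ(α) = b`. -/
def ltPlusOne (S : PreHG) (k : ℕ) (a b : ℕ) : Prop :=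
  ∃ α ∈ S.faces (k+1), a ∈ S.del k α ∧ S.gam k α = b

/-- The upper order `<⁺` on faces of dimension `k` (transitive closure of `⊲⁺`). -/
def ltPlus (S : PreHG) (k : ℕ) : ℕ → ℕ → Prop :=
  Relation.TransGen (S.ltPlusOne k)

/-- One step of the lower order: `a ⊲⁻ b` iff `γ(a) ∈ δ(b)`, on faces of dimension `k`
(the empty relation in dimension 0). -/
def ltMinusOne (S : PreHG) : ℕ → ℕ → ℕ → Prop
  | 0, _, _ => False
  | (k+1), a, b => a ∈ S.faces (k+1) ∧ b ∈ S.faces (k+1) ∧ S.gam k a ∈ S.del k b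

/-- The lower order `<⁻` on faces of dimension `k` (transitive closure of `⊲⁻`). -/
def ltMinus (S : PreHG) (k : ℕ) : ℕ → ℕ → Prop :=
  Relation.TransGen (S.ltMinusOne k)

/-- Comparability in the upper order. -/
def perpPlus (S : PreHG) (k : ℕ) (a b : ℕ) : Prop := S.ltPlus k a b ∨ S.ltPlus k b a

/-- Comparability in the lower order. -/
def perpMinus (S : PreHG) (k : ℕ) (a b : ℕ) : Prop := S.ltMinus k a b ∨ S.ltMinus k b a

/-- Iterated codomain `γ^{(l)}`: maps a face of dimension `l+m` down to dimension `l`. -/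
def gDown (S : PreHG) (l : ℕ) : ℕ → ℕ → ℕ
  | 0, a => a
  | (m+1), a => gDown S l m (S.gam (l+m) a)

/-- The axioms of a positive hypergraph. -/
def IsHG (S : PreHG) : Prop :=
  (∀ k a, a ∈ S.faces (k+1) → S.gam k a ∈ S.faces k) ∧
  (∀ k a, a ∈ S.faces (k+1) → S.del k a ⊆ S.faces k) ∧
  (∀ k a, a ∈ S.faces (k+1) → (S.del k a).Nonempty) ∧
  (∀ a ∈ S.faces 1, (S.del 0 a).card = 1) ∧
  (∃ N, ∀ k, N ≤ k → S.faces k = ∅)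

/-- Globularity: for faces of dimension ≥ 2,
`{γγ(a)} = γδ(a) − δδ(a)` and `δγ(a) = δδ(a) − γδ(a)`. -/
def Globular (S : PreHG) : Prop :=
  ∀ k a, a ∈ S.faces (k+2) →
    ({S.gam k (S.gam (k+1) a)} : Finset ℕ)
        = S.gamS k (S.del (k+1) a) \ S.delS k (S.del (k+1) a) ∧
      S.del k (S.gam (k+1) a)
        = S.delS k (S.del (k+1) a) \ S.gamS k (S.del (k+1) a)

/-- Strictness: `<⁺` is irreflexive in every dimension. -/
def StrictPlus (S : PreHG) : Prop := ∀ k, ∀ a ∈ S.faces k, ¬ S.ltPlus k a a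

/-- `<⁺` is linear in dimension 0. -/
def LinearZero (S : PreHG) : Prop :=
  ∀ a ∈ S.faces 0, ∀ b ∈ S.faces 0, a = b ∨ S.ltPlus 0 a b ∨ S.ltPlus 0 b a

/-- Disjointness: no two faces of positive dimension are comparable in both orders. -/
def Disjointness (S : PreHG) : Prop :=
  ∀ k a b, a ∈ S.faces (k+1) → b ∈ S.faces (k+1) →
    ¬ (S.perpPlus (k+1) a b ∧ S.perpMinus (k+1) a b)

/-- Pencil linearity: γ-fibers and δ-fibers are linearly ordered by `<⁺`. -/
def Pencil (S : PreHG) : Prop :=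
  ∀ k x,
    (∀ a b, a ∈ S.faces (k+1) → b ∈ S.faces (k+1) →
      S.gam k a = x → S.gam k b = x → a = b ∨ S.perpPlus (k+1) a b) ∧
    (∀ a b, a ∈ S.faces (k+1) → b ∈ S.faces (k+1) →
      x ∈ S.del k a → x ∈ S.del k b → a = b ∨ S.perpPlus (k+1) a b)

/-- A positive face structure: a nonempty positive hypergraph satisfying
globularity, strictness, disjointness and pencil linearity. -/
def IsPFS (S : PreHG) : Prop :=
  S.IsHG ∧ (S.faces 0).Nonempty ∧ S.Globular ∧ S.StrictPlus ∧ S.LinearZero ∧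
    S.Disjointness ∧ S.Pencil

end PreHG

/-!
A chain `a ⊲⁻ ⋯ ⊲⁻ b` is mapped by `γ` to a chain of `⊲⁺`-steps, and conversely a
`⊲⁺`-chain from `γ(a)` to `y` lifts to a `⊲⁻`-chain from `a` to some `α` with `γ(α) = y`.
Globularity makes `γ` monotone for `≤⁺`; with pencil linearity this shows that the faces
above any given face form a `≤⁺`-chain, and with disjointness that `a <⁻ c <⁺ b` implies
`a <⁺ b` or `a <⁻ b`. Given `a <⁻ α` with `γ(α) = γ(b)`, pencil linearity compares `α` and
`b`; the only hard case `b <⁺ α = γ(B)` is reduced, by a walk inside `δ(B)`, to a face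
strictly `<⁺`-below `α`, and `<⁺` is well-founded because it is a strict order on finite sets.
-/

theorem wellFounded_of_isStrictOrder_of_finite {α : Type*} {r : α → α → Prop}
    [IsStrictOrder α r] {s : Set α} (hs : s.Finite) (hr : ∀ ⦃a b⦄, r a b → a ∈ s ∧ b ∈ s) :
    WellFounded r :=
  Subrelation.wf (fun hab => ⟨hab, hr hab⟩) (Set.wellFoundedOn_iff.mp hs.wellFoundedOn)

namespace PreHG

variable {S : PreHG}

abbrev lePlus (S : PreHG) (k : ℕ) : ℕ → ℕ → Prop := Relation.ReflTransGen (S.ltPlusOne k)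

abbrev leMinus (S : PreHG) (k : ℕ) : ℕ → ℕ → Prop := Relation.ReflTransGen (S.ltMinusOne k)

theorem IsHG.gam_mem (hHG : S.IsHG) {k a : ℕ} (ha : a ∈ S.faces (k+1)) :
    S.gam k a ∈ S.faces k :=
  hHG.1 k a ha

theorem IsHG.mem_of_mem_del (hHG : S.IsHG) {k a x : ℕ} (ha : a ∈ S.faces (k+1))
    (hx : x ∈ S.del k a) : x ∈ S.faces k :=
  hHG.2.1 k a ha hx

theorem IsHG.mem_of_ltPlus (hHG : S.IsHG) {k a b : ℕ} (hab : S.ltPlus k a b) :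
    a ∈ S.faces k ∧ b ∈ S.faces k := by
  induction hab with
  | single hab =>
    obtain ⟨α, hα, ha, rfl⟩ := hab
    exact ⟨hHG.mem_of_mem_del hα ha, hHG.gam_mem hα⟩
  | tail _ hbc ih =>
    obtain ⟨α, hα, -, rfl⟩ := hbc
    exact ⟨ih.1, hHG.gam_mem hα⟩

theorem mem_of_ltMinus {k a b : ℕ} (hab : S.ltMinus (k+1) a b) : b ∈ S.faces (k+1) := by
  induction hab with
  | single hab => exact hab.2.1
  | tail _ hbc _ => exact hbc.2.1

theorem isStrictOrder_ltPlus (hHG : S.IsHG) (hstrict : S.StrictPlus) (k : ℕ) :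
    IsStrictOrder ℕ (S.ltPlus k) where
  irrefl a h := hstrict k a (hHG.mem_of_ltPlus h).1 h
  trans _ _ _ := Relation.TransGen.trans

theorem wellFounded_ltPlus (hHG : S.IsHG) (hstrict : S.StrictPlus) (k : ℕ) :
    WellFounded (S.ltPlus k) :=
  haveI := isStrictOrder_ltPlus hHG hstrict k
  wellFounded_of_isStrictOrder_of_finite (S.faces k).finite_toSet
    fun _ _ h => hHG.mem_of_ltPlus h

theorem wellFounded_swap_ltPlus (hHG : S.IsHG) (hstrict : S.StrictPlus) (k : ℕ) :
    WellFounded (Function.swap (S.ltPlus k)) :=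
  haveI := isStrictOrder_ltPlus hHG hstrict k
  wellFounded_of_isStrictOrder_of_finite (S.faces k).finite_toSet
    fun _ _ h => (hHG.mem_of_ltPlus h).symm

theorem Globular.eq_gam_gam (hglob : S.Globular) {k A x : ℕ} (hA : A ∈ S.faces (k+2))
    (hγ : x ∈ S.gamS k (S.del (k+1) A)) (hδ : x ∉ S.delS k (S.del (k+1) A)) :
    x = S.gam k (S.gam (k+1) A) :=
  Finset.mem_singleton.mp <| (hglob k A hA).1 ▸ Finset.mem_sdiff.mpr ⟨hγ, hδ⟩

theorem Globular.mem_del_gam (hglob : S.Globular) {k A x : ℕ} (hA : A ∈ S.faces (k+2))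
    (hδ : x ∈ S.delS k (S.del (k+1) A)) (hγ : x ∉ S.gamS k (S.del (k+1) A)) :
    x ∈ S.del k (S.gam (k+1) A) :=
  (hglob k A hA).2 ▸ Finset.mem_sdiff.mpr ⟨hδ, hγ⟩

theorem Globular.mem_delS_of_mem_del_gam (hglob : S.Globular) {k A x : ℕ}
    (hA : A ∈ S.faces (k+2)) (hx : x ∈ S.del k (S.gam (k+1) A)) :
    x ∈ S.delS k (S.del (k+1) A) :=
  (Finset.mem_sdiff.mp ((hglob k A hA).2 ▸ hx)).1

theorem ltPlus_gam_of_ltMinus {k a b : ℕ} (h : S.ltMinus (k+1) a b) :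
    S.ltPlus k (S.gam k a) (S.gam k b) :=
  h.lift (S.gam k) fun _ _ hab => ⟨_, hab.2.1, hab.2.2, rfl⟩

theorem lePlus_gam_of_leMinus {k a b : ℕ} (h : S.leMinus (k+1) a b) :
    S.lePlus k (S.gam k a) (S.gam k b) :=
  h.lift (S.gam k) fun _ _ hab => ⟨_, hab.2.1, hab.2.2, rfl⟩

theorem exists_ltMinus_gam_eq_of_ltPlus_gam {k a y : ℕ} (ha : a ∈ S.faces (k+1))
    (h : S.ltPlus k (S.gam k a) y) : ∃ α, S.ltMinus (k+1) a α ∧ S.gam k α = y := by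
  induction h with
  | single h =>
    obtain ⟨α, hα, haα, rfl⟩ := h
    exact ⟨α, .single ⟨ha, hα, haα⟩, rfl⟩
  | tail _ h ih =>
    obtain ⟨α, haα, rfl⟩ := ih
    obtain ⟨β, hβ, hαβ, rfl⟩ := h
    exact ⟨β, haα.tail ⟨mem_of_ltMinus haα, hβ, hαβ⟩, rfl⟩

/-- As long as `γ(g) ∈ δδ(B)` there is a further `⊲⁻`-step inside `δ(B)`; otherwise
globularity forces `γ(g) = γγ(B)`. -/
theorem exists_leMinus_gam_eq_gam_gam (hHG : S.IsHG) (hstrict : S.StrictPlus)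
    (hglob : S.Globular) {k B g : ℕ} (hB : B ∈ S.faces (k+2)) (hg : g ∈ S.del (k+1) B) :
    ∃ g' ∈ S.del (k+1) B, S.leMinus (k+1) g g' ∧
      S.gam k g' = S.gam k (S.gam (k+1) B) := by
  induction g using (InvImage.wf (S.gam k) (wellFounded_swap_ltPlus hHG hstrict k)).induction
    with | _ g ih =>
  by_cases hδ : S.gam k g ∈ S.delS k (S.del (k+1) B)
  · obtain ⟨g₂, hg₂, hgg₂⟩ := Finset.mem_biUnion.mp hδ
    have hstep : S.ltMinusOne (k+1) g g₂ :=
      ⟨hHG.mem_of_mem_del hB hg, hHG.mem_of_mem_del hB hg₂, hgg₂⟩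
    obtain ⟨g', hg', hg₂g', hγ⟩ := ih g₂ (.single ⟨g₂, hstep.2.1, hgg₂, rfl⟩) hg₂
    exact ⟨g', hg', .head hstep hg₂g', hγ⟩
  · exact ⟨g, hg, .refl, hglob.eq_gam_gam hB (Finset.mem_image_of_mem _ hg) hδ⟩

theorem lePlus_gam_of_lePlus (hHG : S.IsHG) (hstrict : S.StrictPlus) (hglob : S.Globular)
    {k a b : ℕ} (h : S.lePlus (k+1) a b) : S.lePlus k (S.gam k a) (S.gam k b) := by
  refine h.lift' (S.gam k) fun a _ hab => ?_
  obtain ⟨A, hA, ha, rfl⟩ := hab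
  obtain ⟨a', -, haa', hγ⟩ := exists_leMinus_gam_eq_gam_gam hHG hstrict hglob hA ha
  exact (hγ ▸ lePlus_gam_of_leMinus haa' : S.lePlus k (S.gam k a) _)

theorem IsPFS.isHG (hS : S.IsPFS) : S.IsHG := hS.1

theorem IsPFS.globular (hS : S.IsPFS) : S.Globular := hS.2.2.1

theorem IsPFS.strictPlus (hS : S.IsPFS) : S.StrictPlus := hS.2.2.2.1

theorem IsPFS.disjointness (hS : S.IsPFS) : S.Disjointness := hS.2.2.2.2.2.1

theorem IsPFS.pencil (hS : S.IsPFS) : S.Pencil := hS.2.2.2.2.2.2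

/-- Pencil linearity compares the faces `C`, `D` through which the two paths leave `g`,
and `γ` carries the comparison down. -/
theorem IsPFS.exists_ltPlusOne_lePlus_lePlus (hS : S.IsPFS) {k g a c : ℕ}
    (hga : S.ltPlus k g a) (hgc : S.ltPlus k g c) :
    ∃ e, S.ltPlusOne k g e ∧ S.lePlus k e a ∧ S.lePlus k e c := by
  obtain ⟨_, ⟨C, hC, hgC, rfl⟩, hCa⟩ := Relation.TransGen.head'_iff.mp hga
  obtain ⟨_, ⟨D, hD, hgD, rfl⟩, hDc⟩ := Relation.TransGen.head'_iff.mp hgc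
  have hmono {C D : ℕ} (h : S.ltPlus (k+1) C D) : S.lePlus k (S.gam k C) (S.gam k D) :=
    lePlus_gam_of_lePlus hS.isHG hS.strictPlus hS.globular h.to_reflTransGen
  rcases (hS.pencil k g).2 C D hC hD hgC hgD with rfl | hCD | hDC
  · exact ⟨_, ⟨C, hC, hgC, rfl⟩, hCa, hDc⟩
  · exact ⟨_, ⟨C, hC, hgC, rfl⟩, hCa, (hmono hCD).trans hDc⟩
  · exact ⟨_, ⟨D, hD, hgD, rfl⟩, (hmono hDC).trans hCa, hDc⟩

theorem IsPFS.lePlus_total_of_lePlus_of_lePlus (hS : S.IsPFS) {k g a c : ℕ}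
    (hga : S.lePlus k g a) (hgc : S.lePlus k g c) : S.lePlus k a c ∨ S.lePlus k c a := by
  induction g using (wellFounded_swap_ltPlus hS.isHG hS.strictPlus k).induction
    with | _ g ih =>
  rcases Relation.reflTransGen_iff_eq_or_transGen.mp hga with rfl | hga
  · exact .inl hgc
  rcases Relation.reflTransGen_iff_eq_or_transGen.mp hgc with rfl | hgc
  · exact .inr hga.to_reflTransGen
  obtain ⟨e, hge, hea, hec⟩ := hS.exists_ltPlusOne_lePlus_lePlus hga hgc
  exact ih e (.single hge) hea hec

theorem Disjointness.not_ltPlus_of_ltMinus (hdisj : S.Disjointness) {k a c : ℕ}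
    (ha : a ∈ S.faces (k+1)) (hc : c ∈ S.faces (k+1)) (hac : S.ltMinus (k+1) a c) :
    ¬ S.ltPlus (k+1) c a :=
  fun hca => hdisj k a c ha hc ⟨.inr hca, .inl hac⟩

theorem IsPFS.mem_del_gam_or_ltPlus_gam (hS : S.IsPFS) {k a c A : ℕ}
    (hA : A ∈ S.faces (k+2)) (hc : c ∈ S.del (k+1) A) (ha : a ∈ S.faces (k+1))
    (hac : S.gam k a ∈ S.del k c) :
    S.gam k a ∈ S.del k (S.gam (k+1) A) ∨ S.ltPlus (k+1) a (S.gam (k+1) A) := by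
  have hcF := hS.isHG.mem_of_mem_del hA hc
  by_cases hγ : S.gam k a ∈ S.gamS k (S.del (k+1) A)
  · right
    obtain ⟨f, hf, hfa⟩ := Finset.mem_image.mp hγ
    have hfA : S.ltPlusOne (k+1) f (S.gam (k+1) A) := ⟨A, hA, hf, rfl⟩
    rcases (hS.pencil k (S.gam k a)).1 a f ha (hS.isHG.mem_of_mem_del hA hf) rfl hfa
      with rfl | haf | hfa
    · exact .single hfA
    · exact haf.tail hfA
    · have hAa : ¬ S.lePlus (k+1) (S.gam (k+1) A) a := fun h =>
        hS.disjointness.not_ltPlus_of_ltMinus ha hcF (.single ⟨ha, hcF, hac⟩)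
          (.head' ⟨A, hA, hc, rfl⟩ h)
      rcases hS.lePlus_total_of_lePlus_of_lePlus hfa.to_reflTransGen (.single hfA) with h | h
      · exact (Relation.reflTransGen_iff_eq_or_transGen.mp h).resolve_left
          fun h => hAa (h ▸ .refl)
      · exact absurd h hAa
  · exact .inl (hS.globular.mem_del_gam hA (Finset.mem_biUnion.mpr ⟨c, hc, hac⟩) hγ)

theorem IsPFS.ltPlus_or_ltMinus_of_ltMinusOne_of_ltPlus (hS : S.IsPFS) {k a b c : ℕ}
    (hac : S.ltMinusOne (k+1) a c) (hcb : S.ltPlus (k+1) c b) :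
    S.ltPlus (k+1) a b ∨ S.ltMinus (k+1) a b := by
  obtain ⟨ha, -, hac⟩ := hac
  induction hcb using Relation.TransGen.head_induction_on with
  | single hcb =>
    obtain ⟨A, hA, hcA, rfl⟩ := hcb
    exact (hS.mem_del_gam_or_ltPlus_gam hA hcA ha hac).symm.imp id
      fun h => .single ⟨ha, hS.isHG.gam_mem hA, h⟩
  | head hcc' hc'b ih =>
    obtain ⟨A, hA, hcA, rfl⟩ := hcc'
    exact (hS.mem_del_gam_or_ltPlus_gam hA hcA ha hac).elim ih
      fun h => .inl (h.trans hc'b)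

theorem IsPFS.ltPlus_or_ltMinus_of_ltMinus_of_ltPlus (hS : S.IsPFS) {k a b c : ℕ}
    (hac : S.ltMinus (k+1) a c) (hcb : S.ltPlus (k+1) c b) :
    S.ltPlus (k+1) a b ∨ S.ltMinus (k+1) a b := by
  induction hac using Relation.TransGen.head_induction_on with
  | single hac => exact hS.ltPlus_or_ltMinus_of_ltMinusOne_of_ltPlus hac hcb
  | head haa' _ ih =>
    rcases ih with h | h
    · exact hS.ltPlus_or_ltMinus_of_ltMinusOne_of_ltPlus haa' h
    · exact .inr (h.head haa')

/-- If `b <⁺ α = γ(B)`, the face through which `a <⁻ α` enters `α` has its codomain in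
`δδ(B)`; walking inside `δ(B)` gives `g' ⊲⁺ α` with `a <⁻ g'` and `γ(g') = γ(b)`, so
induction on `α` along `<⁺` applies. -/
theorem IsPFS.ltPlus_or_ltMinus_of_ltMinus_of_gam_eq (hS : S.IsPFS) {k a b α : ℕ}
    (hb : b ∈ S.faces (k+1)) (haα : S.ltMinus (k+1) a α) (hγ : S.gam k α = S.gam k b) :
    S.ltPlus (k+1) a b ∨ S.ltMinus (k+1) a b := by
  induction α using (wellFounded_ltPlus hS.isHG hS.strictPlus (k+1)).induction
    with | _ α ih =>
  rcases (hS.pencil k (S.gam k b)).1 α b (mem_of_ltMinus haα) hb hγ rfl with rfl | hαb | hbα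
  · exact .inr haα
  · exact hS.ltPlus_or_ltMinus_of_ltMinus_of_ltPlus haα hαb
  · obtain ⟨-, -, B, hB, -, rfl⟩ := Relation.TransGen.tail'_iff.mp hbα
    obtain ⟨e, hae, he, -, heB⟩ := Relation.TransGen.tail'_iff.mp haα
    obtain ⟨g, hg, heg⟩ :=
      Finset.mem_biUnion.mp (hS.globular.mem_delS_of_mem_del_gam hB heB)
    obtain ⟨g', hg', hgg', hγg'⟩ :=
      exists_leMinus_gam_eq_gam_gam hS.isHG hS.strictPlus hS.globular hB hg
    have hag' : S.ltMinus (k+1) a g' :=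
      (Relation.TransGen.tail' hae ⟨he, hS.isHG.mem_of_mem_del hB hg, heg⟩).trans_left hgg'
    exact ih g' (.single ⟨B, hB, hg', rfl⟩) hag' (hγg'.trans hγ)

theorem IsPFS.ltPlus_or_ltMinus_of_ltPlus_gam (hS : S.IsPFS) {k a b : ℕ}
    (ha : a ∈ S.faces (k+1)) (hb : b ∈ S.faces (k+1))
    (h : S.ltPlus k (S.gam k a) (S.gam k b)) :
    S.ltPlus (k+1) a b ∨ S.ltMinus (k+1) a b :=
  let ⟨_, haα, hγ⟩ := exists_ltMinus_gam_eq_of_ltPlus_gam ha h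
  hS.ltPlus_or_ltMinus_of_ltMinus_of_gam_eq hb haα hγ

end PreHG

/-- For `a, b ∈ S_n`: if `γ(a) = γ(b)` then `a = b` or `a ⊥⁺ b`;
if `γ(a) <⁺ γ(b)` then `a <⁺ b` or `a <⁻ b`; if `a <⁻ b` then `γ(a) <⁺ γ(b)`. -/
theorem stmt11 (S : PreHG) (hS : S.IsPFS) (k a b : ℕ)
    (ha : a ∈ S.faces (k+1)) (hb : b ∈ S.faces (k+1)) :
    (S.gam k a = S.gam k b → a = b ∨ S.perpPlus (k+1) a b) ∧
    (S.ltPlus k (S.gam k a) (S.gam k b) →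
      S.ltPlus (k+1) a b ∨ S.ltMinus (k+1) a b) ∧
    (S.ltMinus (k+1) a b → S.ltPlus k (S.gam k a) (S.gam k b)) :=
  ⟨fun h => (hS.pencil k (S.gam k b)).1 a b ha hb h rfl,
    hS.ltPlus_or_ltMinus_of_ltPlus_gam ha hb,
    PreHG.ltPlus_gam_of_ltMinus⟩
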